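/- Let B₁, B₂, B₃ be 2×2 unitary matrices. Suppose there exists a unit vector |Δ⟩ ∈ ℂ² such that g₁ = |⟨Δ|B₁†B₂|Δ⟩|², g₂ = |⟨Δ|B₂†B₃|Δ⟩|², g₃ = |⟨Δ|B₃†B₁|Δ⟩|² satisfy g₁+g₂+g₃ < 1 and (g₁+g₂+g₃−1)² ≥ 4g₁g₂g₃. Then m₁ = |Tr(B₁†B₂)|²/4, m₂ = |Tr(B₂†B₃)|²/4, m₃ = |Tr(B₃†B₁)|²/4 satisfy m₁+m₂+m₃ < 1 and (m₁+m₂+m₃−1)² ≥ 4m₁m₂m₃. -/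

import Mathlib

open Matrix

/-!
For a 2 × 2 unitary `U`, Cayley–Hamilton reads `U + det U • Uᴴ = tr U • 1`. Sandwiching it
between a unit vector `v` gives `z + det U * conj z = tr U` with `z = ⟨v|U|v⟩`, so the triangle
inequality and `|det U| = 1` yield `|tr U| ≤ 2 |z|`, i.e. `mᵢ ≤ gᵢ`. Both Caves–Fuchs–Schack
conditions are preserved when the overlaps decrease.
-/

namespace Matrix

theorem add_adjugate_fin_two {R : Type*} [CommRing R] (A : Matrix (Fin 2) (Fin 2) R) :
    A + A.adjugate = A.trace • (1 : Matrix (Fin 2) (Fin 2) R) := by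
  ext i j
  fin_cases i <;> fin_cases j <;> simp [adjugate_fin_two, trace_fin_two, add_comm]

theorem adjugate_eq_det_smul_conjTranspose_of_mem_unitaryGroup {n α : Type*} [Fintype n]
    [DecidableEq n] [CommRing α] [StarRing α] {U : Matrix n n α}
    (hU : U ∈ unitaryGroup n α) : U.adjugate = U.det • Uᴴ := by
  calc U.adjugate = Uᴴ * (U * U.adjugate) := by
        rw [← Matrix.mul_assoc, ← star_eq_conjTranspose, hU.1, Matrix.one_mul]
    _ = U.det • Uᴴ := by rw [mul_adjugate, Matrix.mul_smul, Matrix.mul_one]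

theorem star_dotProduct_conjTranspose_mulVec {n α : Type*} [Fintype n] [CommSemiring α]
    [StarRing α] (A : Matrix n n α) (v : n → α) :
    star v ⬝ᵥ Aᴴ *ᵥ v = star (star v ⬝ᵥ A *ᵥ v) := by
  rw [star_dotProduct, star_mulVec, conjTranspose_conjTranspose, dotProduct_mulVec]

variable {𝕜 : Type*} [RCLike 𝕜] {U : Matrix (Fin 2) (Fin 2) 𝕜} {v : Fin 2 → 𝕜}

theorem norm_trace_le_two_mul_norm_star_dotProduct_mulVec (hU : U ∈ unitaryGroup (Fin 2) 𝕜)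
    (hv : star v ⬝ᵥ v = 1) : ‖U.trace‖ ≤ 2 * ‖star v ⬝ᵥ U *ᵥ v‖ := by
  set z := star v ⬝ᵥ U *ᵥ v
  have hz : z + U.det * star z = U.trace := by
    have := congrArg (fun M => star v ⬝ᵥ M *ᵥ v) (add_adjugate_fin_two U)
    simpa only [adjugate_eq_det_smul_conjTranspose_of_mem_unitaryGroup hU, add_mulVec,
      smul_mulVec, one_mulVec, dotProduct_add, dotProduct_smul, smul_eq_mul, hv, mul_one,
      star_dotProduct_conjTranspose_mulVec] using this
  have hdet : ‖U.det‖ = 1 := CStarRing.norm_of_mem_unitary (det_of_mem_unitary hU)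
  calc ‖U.trace‖ = ‖z + U.det * star z‖ := by rw [hz]
    _ ≤ ‖z‖ + ‖U.det * star z‖ := norm_add_le _ _
    _ = 2 * ‖z‖ := by rw [norm_mul, norm_star, hdet]; ring

theorem norm_trace_sq_div_four_le_norm_star_dotProduct_mulVec_sq
    (hU : U ∈ unitaryGroup (Fin 2) 𝕜) (hv : star v ⬝ᵥ v = 1) :
    ‖U.trace‖ ^ 2 / 4 ≤ ‖star v ⬝ᵥ U *ᵥ v‖ ^ 2 := by
  have := norm_trace_le_two_mul_norm_star_dotProduct_mulVec hU hv
  nlinarith [norm_nonneg U.trace]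

end Matrix

/-- Three pure states with pairwise squared overlaps `g₁, g₂, g₃` are antidistinguishable
iff these hold (Caves–Fuchs–Schack). -/
def CavesFuchsSchackCondition (g₁ g₂ g₃ : ℝ) : Prop :=
  g₁ + g₂ + g₃ < 1 ∧ 4 * g₁ * g₂ * g₃ ≤ (g₁ + g₂ + g₃ - 1) ^ 2

theorem CavesFuchsSchackCondition.mono {g₁ g₂ g₃ m₁ m₂ m₃ : ℝ}
    (hg : CavesFuchsSchackCondition g₁ g₂ g₃) (hm₁ : 0 ≤ m₁) (hm₂ : 0 ≤ m₂) (hm₃ : 0 ≤ m₃)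
    (h₁ : m₁ ≤ g₁) (h₂ : m₂ ≤ g₂) (h₃ : m₃ ≤ g₃) : CavesFuchsSchackCondition m₁ m₂ m₃ := by
  obtain ⟨hsum, hprod⟩ := hg
  have hprod_le : m₁ * m₂ * m₃ ≤ g₁ * g₂ * g₃ :=
    mul_le_mul (mul_le_mul h₁ h₂ hm₂ (hm₁.trans h₁)) h₃ hm₃
      (mul_nonneg (hm₁.trans h₁) (hm₂.trans h₂))
  have hsq_le : (g₁ + g₂ + g₃ - 1) ^ 2 ≤ (m₁ + m₂ + m₃ - 1) ^ 2 := by nlinarith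
  exact ⟨by linarith, by linarith⟩

theorem single_probe_implies_maxEntangled_probe
    (B₁ B₂ B₃ : Matrix (Fin 2) (Fin 2) ℂ)
    (hB₁ : B₁ ∈ Matrix.unitaryGroup (Fin 2) ℂ)
    (hB₂ : B₂ ∈ Matrix.unitaryGroup (Fin 2) ℂ)
    (hB₃ : B₃ ∈ Matrix.unitaryGroup (Fin 2) ℂ)
    (Δ : Fin 2 → ℂ) (hΔ : star Δ ⬝ᵥ Δ = 1) :
    let g₁ := ‖(star Δ ⬝ᵥ ((B₁ᴴ * B₂).mulVec Δ))‖ ^ 2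
    let g₂ := ‖(star Δ ⬝ᵥ ((B₂ᴴ * B₃).mulVec Δ))‖ ^ 2
    let g₃ := ‖(star Δ ⬝ᵥ ((B₃ᴴ * B₁).mulVec Δ))‖ ^ 2
    let m₁ := ‖((B₁ᴴ * B₂).trace)‖ ^ 2 / 4
    let m₂ := ‖((B₂ᴴ * B₃).trace)‖ ^ 2 / 4
    let m₃ := ‖((B₃ᴴ * B₁).trace)‖ ^ 2 / 4
    g₁ + g₂ + g₃ < 1 → (g₁ + g₂ + g₃ - 1) ^ 2 ≥ 4 * g₁ * g₂ * g₃ →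
      m₁ + m₂ + m₃ < 1 ∧ (m₁ + m₂ + m₃ - 1) ^ 2 ≥ 4 * m₁ * m₂ * m₃ := by
  intro g₁ g₂ g₃ m₁ m₂ m₃ hsum hprod
  have hm {A B : Matrix (Fin 2) (Fin 2) ℂ} (hA : A ∈ unitaryGroup (Fin 2) ℂ)
      (hB : B ∈ unitaryGroup (Fin 2) ℂ) :
      ‖(Aᴴ * B).trace‖ ^ 2 / 4 ≤ ‖star Δ ⬝ᵥ (Aᴴ * B) *ᵥ Δ‖ ^ 2 :=
    norm_trace_sq_div_four_le_norm_star_dotProduct_mulVec_sq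
      (mul_mem (Unitary.star_mem hA) hB) hΔ
  exact CavesFuchsSchackCondition.mono ⟨hsum, hprod⟩
    (by positivity) (by positivity) (by positivity) (hm hB₁ hB₂) (hm hB₂ hB₃) (hm hB₃ hB₁)
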